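/- arXiv:2412.02022 — 5 statements merged into one kernel-verified Lean document; each statement's English description precedes it below -/
import Mathlib

section
/- If every R-module has a pure-projective preenvelope, then the class of pure-projective R-modules is closed under arbitrary direct products. -/
universe u v

variable (R : Type u) [Ring R]

/-- A surjective linear map is a *pure epimorphism* if every map from a finitely
presented module into the codomain lifts along it (this is equivalent to the
kernel sequence remaining exact after tensoring with every right `R`-module). -/
def IsPureEpi {B C : Type v} [AddCommGroup B] [AddCommGroup C]
    [Module R B] [Module R C] (g : B →ₗ[R] C) : Prop :=
  Function.Surjective g ∧
    ∀ (F : Type v) [AddCommGroup F] [Module R F], Module.FinitePresentation R F →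
      ∀ f : F →ₗ[R] C, ∃ h : F →ₗ[R] B, g ∘ₗ h = f

/-- An injective linear map is a *pure monomorphism* if the associated short exact
sequence `0 → A → B → B ⧸ A → 0` is pure. -/
def IsPureMono {A B : Type v} [AddCommGroup A] [AddCommGroup B]
    [Module R A] [Module R B] (i : A →ₗ[R] B) : Prop :=
  Function.Injective i ∧ IsPureEpi R (LinearMap.range i).mkQ

/-- A module is *pure-projective* if it lifts maps along pure epimorphisms;
equivalently every pure exact sequence ending at it splits. -/
def PureProjective (P : Type v) [AddCommGroup P] [Module R P] : Prop :=
  ∀ (B C : Type v) [AddCommGroup B] [AddCommGroup C] [Module R B] [Module R C]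
    (g : B →ₗ[R] C), IsPureEpi R g → ∀ f : P →ₗ[R] C, ∃ h : P →ₗ[R] B, g ∘ₗ h = f

/-- A module is *pure-injective* if maps into it extend along pure monomorphisms;
equivalently every pure exact sequence starting at it splits. -/
def PureInjective (E : Type v) [AddCommGroup E] [Module R E] : Prop :=
  ∀ (A B : Type v) [AddCommGroup A] [AddCommGroup B] [Module R A] [Module R B]
    (i : A →ₗ[R] B), IsPureMono R i → ∀ f : A →ₗ[R] E, ∃ h : B →ₗ[R] E, h ∘ₗ i = f

/-- If every `R`-module has a pure-projective preenvelope, then the class of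
pure-projective modules is closed under arbitrary direct products. -/
theorem pureProjective_prod_of_preenvelopes
    (H : ∀ (M : Type v) [AddCommGroup M] [Module R M],
      ∃ (C : ModuleCat.{v} R) (f : M →ₗ[R] C), PureProjective R C ∧
        ∀ (C' : Type v) [AddCommGroup C'] [Module R C'], PureProjective R C' →
          ∀ g : M →ₗ[R] C', ∃ h : C →ₗ[R] C', h ∘ₗ f = g) :
    ∀ (ι : Type v) (F : ι → Type v) [∀ i, AddCommGroup (F i)] [∀ i, Module R (F i)],
      (∀ i, PureProjective R (F i)) → PureProjective R (∀ i, F i) := by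
  intro ι F _ _ hF
  obtain ⟨C, f, hC, hmax⟩ := H (∀ i, F i)
  choose hcomp hhcomp using fun i => hmax (F i) (hF i) (LinearMap.proj i)
  set r : C →ₗ[R] ∀ i, F i := LinearMap.pi hcomp with hr
  have hretr : r ∘ₗ f = LinearMap.id := by
    ext x i
    exact LinearMap.congr_fun (hhcomp i) x
  intro B Co _ _ _ _ g hg ψ
  obtain ⟨l, hl⟩ := hC B Co g hg (ψ ∘ₗ r)
  refine ⟨l ∘ₗ f, ?_⟩
  rw [← LinearMap.comp_assoc, hl, LinearMap.comp_assoc, hretr, LinearMap.comp_id]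
end

section
/- If every R-module has a pure-injective precover, then the class of pure-injective R-modules is closed under arbitrary direct sums. -/
universe u v

variable (R : Type u) [Ring R]

/-- If every `R`-module has a pure-injective precover, then the class of
pure-injective modules is closed under arbitrary direct sums. -/
theorem pureInjective_directSum_of_precovers
    (H : ∀ (M : Type v) [AddCommGroup M] [Module R M],
      ∃ (E : ModuleCat.{v} R) (f : E →ₗ[R] M), PureInjective R E ∧
        ∀ (E' : Type v) [AddCommGroup E'] [Module R E'], PureInjective R E' →
          ∀ g : E' →ₗ[R] M, ∃ h : E' →ₗ[R] E, f ∘ₗ h = g) :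
    ∀ (ι : Type v) (F : ι → Type v) [∀ i, AddCommGroup (F i)] [∀ i, Module R (F i)],
      (∀ i, PureInjective R (F i)) → PureInjective R (DirectSum ι F) := by
  intro ι F _ _ hF A B _ _ _ _ i hi g
  classical
  obtain ⟨E, f, hE, hprec⟩ := H (DirectSum ι F)
  choose h hh using fun j => hprec (F j) (hF j) (DirectSum.lof R ι F j)
  set s : DirectSum ι F →ₗ[R] E := DirectSum.toModule R ι E h with hs_def
  have hs : f ∘ₗ s = LinearMap.id := by
    apply DirectSum.linearMap_ext
    intro j
    rw [LinearMap.comp_assoc, hs_def]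
    ext x
    simp only [LinearMap.comp_apply, DirectSum.toModule_lof, LinearMap.id_comp]
    rw [← LinearMap.comp_apply, hh j]
  obtain ⟨k, hk⟩ := hE A B i hi (s ∘ₗ g)
  refine ⟨f ∘ₗ k, ?_⟩
  rw [LinearMap.comp_assoc, hk, ← LinearMap.comp_assoc, hs, LinearMap.id_comp]
end

section
/- A ring R is left pure-semisimple if and only if every pure epimorphism of left R-modules splits, if and only if every pure monomorphism of left R-modules splits. -/
universe u v

variable (R : Type u) [Ring R]

section Helpers

variable {R}

/-- If every pure epimorphism splits, every module is pure-projective (pullback trick). -/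
theorem epiSplits_to_pureProjective
    (hsplit : ∀ (B C : Type v) [AddCommGroup B] [AddCommGroup C] [Module R B] [Module R C]
        (g : B →ₗ[R] C), IsPureEpi R g → ∃ s : C →ₗ[R] B, g ∘ₗ s = LinearMap.id) :
    ∀ (M : Type v) [AddCommGroup M] [Module R M], PureProjective R M := by
  intro M _ _ B C _ _ _ _ g hg f
  set D : Submodule R (B × M) :=
    LinearMap.ker ((g ∘ₗ LinearMap.fst R B M) - (f ∘ₗ LinearMap.snd R B M)) with hD
  have hmem : ∀ (b : B) (m : M), (b, m) ∈ D ↔ g b = f m := by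
    intro b m
    simp [hD, LinearMap.mem_ker, sub_eq_zero]
  let πB : D →ₗ[R] B := (LinearMap.fst R B M) ∘ₗ D.subtype
  let πM : D →ₗ[R] M := (LinearMap.snd R B M) ∘ₗ D.subtype
  have hπ : IsPureEpi R πM := by
    constructor
    · intro m
      obtain ⟨b, hb⟩ := hg.1 (f m)
      exact ⟨⟨(b, m), (hmem b m).2 hb⟩, rfl⟩
    · intro F _ _ hF φ
      obtain ⟨h, hh⟩ := hg.2 F hF (f ∘ₗ φ)
      refine ⟨LinearMap.codRestrict D (LinearMap.prod h φ) ?_, ?_⟩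
      · intro x
        exact (hmem (h x) (φ x)).2 (LinearMap.congr_fun hh x)
      · ext x; rfl
  obtain ⟨s, hs⟩ := hsplit D M πM hπ
  refine ⟨πB ∘ₗ s, ?_⟩
  ext m
  have h1 : g (πB (s m)) = f (πM (s m)) := (hmem _ _).1 (s m).2
  have h2 : πM (s m) = m := LinearMap.congr_fun hs m
  simpa [h2] using h1

/-- If every pure epimorphism splits, every pure monomorphism splits. -/
theorem epiSplits_to_monoSplits
    (hsplit : ∀ (B C : Type v) [AddCommGroup B] [AddCommGroup C] [Module R B] [Module R C]
        (g : B →ₗ[R] C), IsPureEpi R g → ∃ s : C →ₗ[R] B, g ∘ₗ s = LinearMap.id) :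
    ∀ (A B : Type v) [AddCommGroup A] [AddCommGroup B] [Module R A] [Module R B]
        (i : A →ₗ[R] B), IsPureMono R i → ∃ r : B →ₗ[R] A, r ∘ₗ i = LinearMap.id := by
  intro A B _ _ _ _ i hi
  obtain ⟨hinj, hepi⟩ := hi
  obtain ⟨s, hs⟩ := hsplit _ _ _ hepi
  let p : B →ₗ[R] B := LinearMap.id - s ∘ₗ (LinearMap.range i).mkQ
  have hp : ∀ b, p b ∈ LinearMap.range i := by
    intro b
    rw [← Submodule.Quotient.mk_eq_zero (LinearMap.range i)]
    have hss := LinearMap.congr_fun hs ((LinearMap.range i).mkQ b)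
    simp only [LinearMap.comp_apply, LinearMap.id_apply] at hss
    show (LinearMap.range i).mkQ (p b) = 0
    simp only [Submodule.mkQ_apply] at hss
    simp [p, map_sub, hss]
  let e : A ≃ₗ[R] LinearMap.range i := LinearEquiv.ofInjective i hinj
  refine ⟨e.symm.toLinearMap ∘ₗ LinearMap.codRestrict _ p hp, ?_⟩
  ext a
  have hmk : (LinearMap.range i).mkQ (i a) = 0 := by
    rw [Submodule.mkQ_apply, Submodule.Quotient.mk_eq_zero]
    exact ⟨a, rfl⟩
  have hpa : p (i a) = i a := by
    simp [p, hmk]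
  simp only [LinearMap.comp_apply, LinearMap.id_apply, LinearEquiv.coe_coe]
  rw [LinearEquiv.symm_apply_eq]
  apply Subtype.ext
  simpa [e, LinearEquiv.ofInjective_apply] using hpa

/-- If every pure monomorphism splits, every pure epimorphism splits
(via the kernel inclusion, which is a pure mono). -/
theorem monoSplits_to_epiSplits
    (hsplit : ∀ (A B : Type v) [AddCommGroup A] [AddCommGroup B] [Module R A] [Module R B]
        (i : A →ₗ[R] B), IsPureMono R i → ∃ r : B →ₗ[R] A, r ∘ₗ i = LinearMap.id) :
    ∀ (B C : Type v) [AddCommGroup B] [AddCommGroup C] [Module R B] [Module R C]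
        (g : B →ₗ[R] C), IsPureEpi R g → ∃ s : C →ₗ[R] B, g ∘ₗ s = LinearMap.id := by
  intro B C _ _ _ _ g hg
  let K := LinearMap.ker g
  let gbar : (B ⧸ K) →ₗ[R] C := K.liftQ g le_rfl
  have hgbar_mk : ∀ b : B, gbar (K.mkQ b) = g b := fun b => rfl
  have hginj : Function.Injective gbar := by
    rw [← LinearMap.ker_eq_bot]
    exact Submodule.ker_liftQ_eq_bot _ _ _ le_rfl
  have hgsurj : Function.Surjective gbar := by
    intro c
    obtain ⟨b, hb⟩ := hg.1 c
    exact ⟨K.mkQ b, by rw [hgbar_mk, hb]⟩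
  -- kernel inclusion is a pure mono
  have hmono : IsPureMono R K.subtype := by
    refine ⟨Subtype.val_injective, ?_⟩
    rw [Submodule.range_subtype]
    constructor
    · exact Submodule.mkQ_surjective K
    · intro F _ _ hF f
      obtain ⟨h, hh⟩ := hg.2 F hF (gbar ∘ₗ f)
      refine ⟨h, ?_⟩
      ext x
      apply hginj
      have := LinearMap.congr_fun hh x
      exact this
  obtain ⟨r, hr⟩ := hsplit _ _ K.subtype hmono
  let p : B →ₗ[R] B := LinearMap.id - K.subtype ∘ₗ r
  have hle : K ≤ LinearMap.ker p := by
    intro b hb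
    have hrb : r b = ⟨b, hb⟩ := by
      have := LinearMap.congr_fun hr (⟨b, hb⟩ : K)
      simpa using this
    simp [LinearMap.mem_ker, p, hrb]
  let ebar : (B ⧸ K) ≃ₗ[R] C := LinearEquiv.ofBijective gbar ⟨hginj, hgsurj⟩
  refine ⟨(K.liftQ p hle) ∘ₗ ebar.symm.toLinearMap, ?_⟩
  ext c
  obtain ⟨b, hb⟩ := Submodule.mkQ_surjective K (ebar.symm c)
  have hc : g b = c := by
    have h1 : ebar (K.mkQ b) = ebar (ebar.symm c) := congrArg ebar hb
    rw [LinearEquiv.apply_symm_apply] at h1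
    have h2 : ebar (K.mkQ b) = g b := hgbar_mk b
    rw [h2] at h1
    exact h1
  have hgr : g ((K.subtype) (r b)) = 0 := (r b).2
  simp only [LinearMap.comp_apply, LinearMap.id_apply, LinearEquiv.coe_coe, ← hb,
    Submodule.liftQ_apply]
  simp [p, map_sub, hgr, hc]

end Helpers

/-- `R` is left pure-semisimple iff every pure epimorphism splits, iff every pure
monomorphism splits. -/
theorem pureSemisimple_iff_pure_epi_splits_iff_pure_mono_splits :
    ((∀ (M : Type v) [AddCommGroup M] [Module R M], PureProjective R M) ↔
      (∀ (B C : Type v) [AddCommGroup B] [AddCommGroup C] [Module R B] [Module R C]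
        (g : B →ₗ[R] C), IsPureEpi R g → ∃ s : C →ₗ[R] B, g ∘ₗ s = LinearMap.id)) ∧
    ((∀ (M : Type v) [AddCommGroup M] [Module R M], PureProjective R M) ↔
      (∀ (A B : Type v) [AddCommGroup A] [AddCommGroup B] [Module R A] [Module R B]
        (i : A →ₗ[R] B), IsPureMono R i → ∃ r : B →ₗ[R] A, r ∘ₗ i = LinearMap.id)) := by
  have fwd : (∀ (M : Type v) [AddCommGroup M] [Module R M], PureProjective R M) →
      (∀ (B C : Type v) [AddCommGroup B] [AddCommGroup C] [Module R B] [Module R C]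
        (g : B →ₗ[R] C), IsPureEpi R g → ∃ s : C →ₗ[R] B, g ∘ₗ s = LinearMap.id) := by
    intro hpp B C _ _ _ _ g hg
    exact hpp C B C g hg LinearMap.id
  refine ⟨⟨fwd, epiSplits_to_pureProjective⟩,
    ⟨fun hpp => epiSplits_to_monoSplits (fwd hpp),
     fun hm => epiSplits_to_pureProjective (monoSplits_to_epiSplits hm)⟩⟩
end

section
/- If every left R-module is pure-projective then every left R-module is pure-injective, and conversely: the condition that all modules are pure-projective is equivalent to the condition that all modules are pure-injective. -/
universe u v

variable (R : Type u) [Ring R]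

/-- The kernel inclusion of a pure epimorphism is a pure monomorphism. -/
lemma ker_subtype_isPureMono {B C : Type v} [AddCommGroup B] [AddCommGroup C]
    [Module R B] [Module R C] (g : B →ₗ[R] C) (hg : IsPureEpi R g) :
    IsPureMono R (LinearMap.ker g).subtype := by
  obtain ⟨gsurj, glift⟩ := hg
  refine ⟨Submodule.injective_subtype _, Submodule.mkQ_surjective _, ?_⟩
  intro F _ _ hF f
  have hle : LinearMap.range (LinearMap.ker g).subtype ≤ LinearMap.ker g := by
    rw [Submodule.range_subtype]
  set gbar : (B ⧸ LinearMap.range (LinearMap.ker g).subtype) →ₗ[R] C :=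
    Submodule.liftQ _ g hle with hgbar
  have hinj : Function.Injective gbar := by
    rw [← LinearMap.ker_eq_bot]
    apply Submodule.ker_liftQ_eq_bot
    rw [Submodule.range_subtype]
  obtain ⟨h, hh⟩ := glift F hF (gbar ∘ₗ f)
  refine ⟨h, ?_⟩
  ext x
  apply hinj
  have h1 : gbar ((LinearMap.range (LinearMap.ker g).subtype).mkQ (h x)) = g (h x) := by
    simp [hgbar]
  have h2 : g (h x) = gbar (f x) := LinearMap.congr_fun hh x
  rw [LinearMap.comp_apply, h1, h2]

/-- All modules are pure-projective iff all modules are pure-injective. -/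
theorem all_pureProjective_iff_all_pureInjective :
    (∀ (M : Type v) [AddCommGroup M] [Module R M], PureProjective R M) ↔
    (∀ (M : Type v) [AddCommGroup M] [Module R M], PureInjective R M) := by
  constructor
  · -- all pure-projective → all pure-injective
    intro hP E _ _ A B _ _ _ _ i hi f
    obtain ⟨hinj, hepi⟩ := hi
    obtain ⟨h, hh⟩ := hP (B ⧸ LinearMap.range i) B (B ⧸ LinearMap.range i)
      (LinearMap.range i).mkQ hepi LinearMap.id
    set p : B →ₗ[R] B := LinearMap.id - h ∘ₗ (LinearMap.range i).mkQ with hp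
    have hmem : ∀ b, p b ∈ LinearMap.range i := by
      intro b
      rw [← Submodule.ker_mkQ (LinearMap.range i), LinearMap.mem_ker]
      have := LinearMap.congr_fun hh ((LinearMap.range i).mkQ b)
      have goal : (LinearMap.range i).mkQ (p b) =
          (LinearMap.range i).mkQ b - (LinearMap.range i).mkQ (h ((LinearMap.range i).mkQ b)) := by
        simp [hp]
      simp only [LinearMap.coe_comp, Function.comp_apply, LinearMap.id_apply] at this
      rw [goal, this, sub_self]
    have hpi : ∀ a : A, p (i a) = i a := by
      intro a
      have : (LinearMap.range i).mkQ (i a) = 0 := by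
        rw [Submodule.mkQ_apply, Submodule.Quotient.mk_eq_zero]
        exact LinearMap.mem_range_self i a
      simp [hp, this]
    set e := LinearEquiv.ofInjective i hinj with he
    set r : B →ₗ[R] A :=
      e.symm.toLinearMap ∘ₗ LinearMap.codRestrict (LinearMap.range i) p hmem with hr
    refine ⟨f ∘ₗ r, ?_⟩
    ext a
    have : r (i a) = a := by
      rw [hr]
      simp only [LinearMap.coe_comp, Function.comp_apply, LinearEquiv.coe_coe]
      rw [LinearEquiv.symm_apply_eq]
      ext
      simp [he, hpi a, LinearEquiv.ofInjective_apply]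
    simp [this]
  · -- all pure-injective → all pure-projective
    intro hI P _ _ B C _ _ _ _ g hg f
    obtain ⟨r, hr⟩ := hI (LinearMap.ker g) (LinearMap.ker g) B (LinearMap.ker g).subtype
      (ker_subtype_isPureMono R g hg) LinearMap.id
    obtain ⟨gsurj, -⟩ := hg
    -- q := id - subtype ∘ r kills ker g
    set q : B →ₗ[R] B := LinearMap.id - (LinearMap.ker g).subtype ∘ₗ r with hq
    have hker : LinearMap.ker g ≤ LinearMap.ker q := by
      intro b hb
      have hb' : b = (LinearMap.ker g).subtype ⟨b, hb⟩ := rfl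
      have := LinearMap.congr_fun hr ⟨b, hb⟩
      simp only [LinearMap.coe_comp, Function.comp_apply, LinearMap.id_apply] at this
      simp only [LinearMap.mem_ker, hq, LinearMap.sub_apply, LinearMap.coe_comp,
        Function.comp_apply, LinearMap.id_apply]
      rw [show r b = r ((LinearMap.ker g).subtype ⟨b, hb⟩) from rfl, this]
      simp
    set gbar : (B ⧸ LinearMap.ker g) →ₗ[R] C := Submodule.liftQ _ g le_rfl with hgbar
    have hbij : Function.Bijective gbar := by
      constructor
      · rw [← LinearMap.ker_eq_bot]
        exact Submodule.ker_liftQ_eq_bot _ _ _ le_rfl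
      · intro c; obtain ⟨b, rfl⟩ := gsurj c
        exact ⟨(LinearMap.ker g).mkQ b, by simp [hgbar]⟩
    set eq := LinearEquiv.ofBijective gbar hbij with heq
    set s : C →ₗ[R] B := Submodule.liftQ _ q hker ∘ₗ eq.symm.toLinearMap with hs
    have hgs : ∀ c, g (s c) = c := by
      intro c
      obtain ⟨x, rfl⟩ : ∃ x, eq x = c := ⟨eq.symm c, by simp⟩
      obtain ⟨b, rfl⟩ := Submodule.mkQ_surjective _ x
      have h1 : s (eq ((LinearMap.ker g).mkQ b)) = q b := by
        simp [hs]
      have h2 : eq ((LinearMap.ker g).mkQ b) = g b := by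
        simp [heq, hgbar]
      rw [h1]
      have : g (q b) = g b := by
        simp only [hq, LinearMap.sub_apply, LinearMap.coe_comp, Function.comp_apply,
          LinearMap.id_apply, map_sub]
        have : g ((LinearMap.ker g).subtype (r b)) = 0 := (r b).2
        rw [this, sub_zero]
      rw [this, h2]
    refine ⟨s ∘ₗ f, ?_⟩
    ext x
    simp [hgs]
end

section
/- A module N is Σ-pure-injective (i.e., every direct sum of copies of N is pure-injective) if and only if the countable direct sum N^(ℵ0) is pure-injective. -/
universe u v


variable (R : Type u) [Ring R]

namespace SigmaPI

open Function

variable {R : Type u} [Ring R]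

variable (R) in
/-- The "matrix subgroup" (pp-definable subgroup) of a module `M` determined by a finite
homogeneous linear system: elements `y` such that the system
`c0 t • y + ∑ j, c1 t j • v j = 0` (for all `t : α`) has a solution `v : β → M`. -/
def msub (m n : ℕ) (c0 : Fin m → R) (c1 : Fin m → Fin n → R)
    (M : Type*) [AddCommGroup M] [Module R M] : AddSubgroup M where
  carrier := {y | ∃ v : Fin n → M, ∀ t, c0 t • y + ∑ j, c1 t j • v j = 0}
  zero_mem' := ⟨0, fun t => by simp⟩
  add_mem' := by
    rintro a b ⟨v, hv⟩ ⟨w, hw⟩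
    refine ⟨v + w, fun t => ?_⟩
    have : (c0 t • a + ∑ j, c1 t j • v j) + (c0 t • b + ∑ j, c1 t j • w j) = 0 := by
      rw [hv t, hw t, add_zero]
    calc c0 t • (a + b) + ∑ j, c1 t j • (v + w) j
        = (c0 t • a + ∑ j, c1 t j • v j) + (c0 t • b + ∑ j, c1 t j • w j) := by
          simp only [smul_add, Pi.add_apply, Finset.sum_add_distrib]
          abel
      _ = 0 := this
  neg_mem' := by
    rintro a ⟨v, hv⟩
    refine ⟨-v, fun t => ?_⟩
    have : -(c0 t • a + ∑ j, c1 t j • v j) = 0 := by rw [hv t, neg_zero]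
    calc c0 t • (-a) + ∑ j, c1 t j • (-v) j
        = -(c0 t • a + ∑ j, c1 t j • v j) := by
          simp only [smul_neg, Pi.neg_apply, neg_add, Finset.sum_neg_distrib]
      _ = 0 := this

variable (R) in
/-- A subgroup is a matrix subgroup if it is of the form `msub`. -/
def IsMS (M : Type*) [AddCommGroup M] [Module R M] (H : AddSubgroup M) : Prop :=
  ∃ (m n : ℕ) (c0 : Fin m → R) (c1 : Fin m → Fin n → R), H = msub R m n c0 c1 M

theorem msub_map {M M' : Type*} [AddCommGroup M] [Module R M] [AddCommGroup M'] [Module R M']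
    (g : M →ₗ[R] M') {m n : ℕ} {c0 : Fin m → R} {c1 : Fin m → Fin n → R}
    {y : M} (hy : y ∈ msub R m n c0 c1 M) : g y ∈ msub R m n c0 c1 M' := by
  obtain ⟨v, hv⟩ := hy
  refine ⟨fun j => g (v j), fun t => ?_⟩
  have := congrArg g (hv t)
  simpa [map_add, map_sum, map_smul] using this

theorem msub_pi {κ : Type*} {M : κ → Type*} [∀ k, AddCommGroup (M k)] [∀ k, Module R (M k)]
    {m n : ℕ} {c0 : Fin m → R} {c1 : Fin m → Fin n → R}
    (q : ∀ k, M k) (h : ∀ k, q k ∈ msub R m n c0 c1 (M k)) :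
    q ∈ msub R m n c0 c1 (∀ k, M k) := by
  choose w hw using h
  refine ⟨fun j k => w k j, fun t => ?_⟩
  funext k
  have := hw k t
  simpa [Finset.sum_apply] using this



theorem msub_directSum_of_components {ι : Type*} [DecidableEq ι]
    {N : Type*} [AddCommGroup N] [Module R N]
    {m n : ℕ} {c0 : Fin m → R} {c1 : Fin m → Fin n → R}
    (y : DirectSum ι (fun _ => N))
    (h : ∀ i, y i ∈ msub R m n c0 c1 N) :
    y ∈ msub R m n c0 c1 (DirectSum ι (fun _ => N)) := by
  classical
  have hy : (∑ i ∈ DFinsupp.support y, DirectSum.of (fun _ : ι => N) i (y i)) = y :=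
    DirectSum.sum_support_of y
  rw [← hy]
  refine AddSubgroup.sum_mem _ (fun i _ => ?_)
  have : (DirectSum.lof R ι (fun _ => N) i) (y i) ∈ msub R m n c0 c1 (DirectSum ι (fun _ => N)) :=
    msub_map (DirectSum.lof R ι (fun _ => N) i) (h i)
  simpa [DirectSum.lof_eq_of] using this

theorem msub_component {ι : Type*} [DecidableEq ι]
    {N : Type*} [AddCommGroup N] [Module R N]
    {m n : ℕ} {c0 : Fin m → R} {c1 : Fin m → Fin n → R}
    {y : DirectSum ι (fun _ => N)}
    (h : y ∈ msub R m n c0 c1 (DirectSum ι (fun _ => N))) (i : ι) :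
    y i ∈ msub R m n c0 c1 N :=
  msub_map (DirectSum.component R ι (fun _ => N) i) h


theorem pureInjective_of_retract {X Y : Type v} [AddCommGroup X] [Module R X]
    [AddCommGroup Y] [Module R Y] (sig : X →ₗ[R] Y) (pi : Y →ₗ[R] X)
    (h : pi ∘ₗ sig = LinearMap.id) (hY : PureInjective R Y) : PureInjective R X := by
  intro A B _ _ _ _ i hi f
  obtain ⟨g, hg⟩ := hY A B i hi (sig ∘ₗ f)
  refine ⟨pi ∘ₗ g, ?_⟩
  rw [LinearMap.comp_assoc, hg, ← LinearMap.comp_assoc, h, LinearMap.id_comp]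

theorem directSumRetract {T : Type*} {T' : Type*} (g : T → T') (hg : Injective g)
    (N : Type*) [AddCommGroup N] [Module R N] :
    ∃ (sig : DirectSum T (fun _ => N) →ₗ[R] DirectSum T' (fun _ => N))
      (pi : DirectSum T' (fun _ => N) →ₗ[R] DirectSum T (fun _ => N)),
      pi ∘ₗ sig = LinearMap.id ∧
      ∀ x : DirectSum T' (fun _ => N),
        (∀ i, x i ≠ 0 → i ∈ Set.range g) → x ∈ LinearMap.range sig := by
  classical
  refine ⟨DirectSum.toModule R T _ (fun t => DirectSum.lof R T' (fun _ => N) (g t)),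
    DirectSum.toModule R T' _
      (fun i => if h : ∃ t, g t = i then DirectSum.lof R T (fun _ => N) h.choose else 0),
    ?_, ?_⟩
  · refine DirectSum.linearMap_ext _ (fun t => ?_)
    ext x
    simp only [LinearMap.comp_apply, DirectSum.toModule_lof, LinearMap.id_comp]
    have hex : ∃ t', g t' = g t := ⟨t, rfl⟩
    rw [dif_pos hex]
    have : hex.choose = t := hg hex.choose_spec
    rw [this]
  · intro x hx
    have hy : (∑ i ∈ DFinsupp.support x, DirectSum.of (fun _ : T' => N) i (x i)) = x :=
      DirectSum.sum_support_of x
    rw [← hy]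
    refine Submodule.sum_mem _ (fun i hi => ?_)
    have hxi : x i ≠ 0 := DFinsupp.mem_support_iff.1 hi
    obtain ⟨t, rfl⟩ := hx i hxi
    refine ⟨DirectSum.lof R T (fun _ => N) t (x (g t)), ?_⟩
    rw [DirectSum.toModule_lof]
    simp [DirectSum.lof_eq_of]


theorem isPureMono_coePi (N : Type v) [AddCommGroup N] [Module R N] :
    IsPureMono R (LinearMap.pi (fun i => DirectSum.component R ℕ (fun _ => N) i) :
      DirectSum ℕ (fun _ => N) →ₗ[R] (ℕ → N)) := by
  classical
  set E0 := DirectSum ℕ (fun _ => N) with hE0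
  set inc : E0 →ₗ[R] (ℕ → N) :=
    LinearMap.pi (fun i => DirectSum.component R ℕ (fun _ => N) i) with hinc
  have hinc_apply : ∀ (x : E0) (k : ℕ), inc x k = x k := fun x k => rfl
  constructor
  · intro x y hxy
    exact DFinsupp.ext (fun k => congrFun hxy k)
  · refine ⟨Submodule.mkQ_surjective _, ?_⟩
    intro F _ _ hFP phi
    obtain ⟨s, hspan, hker⟩ := hFP.1
    set pr := Finsupp.linearCombination R ((↑) : s → F) with hpr_def
    have hpr : Surjective pr := by
      rw [← LinearMap.range_eq_top, hpr_def, Finsupp.range_linearCombination,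
        Subtype.range_coe]
      exact hspan
    obtain ⟨T, hT⟩ := hker
    have hmkq : Surjective (LinearMap.range inc).mkQ := Submodule.mkQ_surjective _
    choose y hy using fun aa : s => hmkq (phi (pr (Finsupp.single aa 1)))
    have hmkly : (LinearMap.range inc).mkQ ∘ₗ Finsupp.linearCombination R y = phi ∘ₗ pr := by
      apply Finsupp.lhom_ext
      intro aa r
      simp only [LinearMap.comp_apply, Finsupp.linearCombination_single, map_smul, hy, hpr_def, one_smul]
    have hTker : ∀ w ∈ T, pr w = 0 := by
      intro w hw
      have hw' : w ∈ LinearMap.ker pr := by rw [← hT]; exact Submodule.subset_span hw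
      exact hw'
    have hTrange : ∀ w : {w // w ∈ T}, ∃ x : E0, inc x = Finsupp.linearCombination R y w := by
      intro w
      have h0 : (LinearMap.range inc).mkQ (Finsupp.linearCombination R y (w : s →₀ R)) = 0 := by
        have := LinearMap.congr_fun hmkly (w : s →₀ R)
        simp only [LinearMap.comp_apply] at this
        rw [this, hTker w w.2, map_zero]
      rw [Submodule.mkQ_apply, Submodule.Quotient.mk_eq_zero] at h0
      exact h0
    choose xw hxw using hTrange
    set S : Finset ℕ := T.attach.biUnion (fun w => DFinsupp.support (xw w)) with hS
    set b : s → (ℕ → N) := fun aa k => if k ∈ S then 0 else y aa k with hb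
    have hsmall : ∀ z : ℕ → N, (∀ k, k ∉ S → z k = 0) → ∃ x : E0, inc x = z := by
      intro z hz
      refine ⟨∑ k ∈ S, DirectSum.lof R ℕ (fun _ => N) k (z k), ?_⟩
      funext k
      rw [hinc_apply]
      have : ((∑ k' ∈ S, DirectSum.lof R ℕ (fun _ => N) k' (z k')) : E0) k
          = ∑ k' ∈ S, ((DirectSum.lof R ℕ (fun _ => N) k' (z k') : E0) k) := by
        exact DFinsupp.finset_sum_apply S _ k
      rw [this]
      by_cases hk : k ∈ S
      · rw [Finset.sum_eq_single k]
        · simp [DirectSum.lof_eq_of, DirectSum.of_apply]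
        · intro k' _ hk'
          simp [DirectSum.lof_eq_of, DirectSum.of_apply, hk']
        · intro h; exact absurd hk h
      · rw [hz k hk]
        refine Finset.sum_eq_zero (fun k' hk' => ?_)
        have : k' ≠ k := fun h => hk (h ▸ hk')
        simp [DirectSum.lof_eq_of, DirectSum.of_apply, this]
    have hA : ∀ w ∈ T, Finsupp.linearCombination R b w = 0 := by
      intro w hw
      funext k
      rw [Finsupp.linearCombination_apply, Finsupp.sum]
      show (∑ aa ∈ w.support, w aa • b aa) k = (0 : ℕ → N) k
      rw [Finset.sum_apply]
      by_cases hk : k ∈ S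
      · refine Finset.sum_eq_zero (fun aa _ => ?_) |>.trans rfl
        show w aa • b aa k = 0
        rw [hb]; simp [hk]
      · have h1 : ∀ aa ∈ w.support, (w aa • b aa) k = (w aa • y aa) k := by
          intro aa _
          show w aa • b aa k = w aa • y aa k
          rw [hb]; simp [hk]
        rw [Finset.sum_congr rfl h1, ← Finset.sum_apply]
        have h2 : (∑ aa ∈ w.support, w aa • y aa) = Finsupp.linearCombination R y w := by
          rw [Finsupp.linearCombination_apply, Finsupp.sum]
        rw [h2, ← hxw ⟨w, hw⟩, hinc_apply]
        have hknotin : k ∉ DFinsupp.support (xw ⟨w, hw⟩) := by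
          intro hmem
          exact hk (Finset.mem_biUnion.2 ⟨⟨w, hw⟩, Finset.mem_attach _ _, hmem⟩)
        exact DFinsupp.notMem_support_iff.1 hknotin
    have hB : ∀ aa : s, (LinearMap.range inc).mkQ (b aa) = (LinearMap.range inc).mkQ (y aa) := by
      intro aa
      rw [← sub_eq_zero, ← map_sub, Submodule.mkQ_apply, Submodule.Quotient.mk_eq_zero]
      obtain ⟨x, hx⟩ := hsmall (b aa - y aa) (fun k hk => by
        show b aa k - y aa k = 0
        rw [hb]; simp [hk])
      exact ⟨x, hx⟩
    have hle : LinearMap.ker pr ≤ LinearMap.ker (Finsupp.linearCombination R b) := by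
      rw [← hT, Submodule.span_le]
      intro w hw
      exact LinearMap.mem_ker.2 (hA w hw)
    set e := LinearMap.quotKerEquivOfSurjective pr hpr with he
    set hmap : F →ₗ[R] (ℕ → N) :=
      ((LinearMap.ker pr).liftQ (Finsupp.linearCombination R b) hle) ∘ₗ e.symm.toLinearMap
      with hhmap
    have hcomp : (LinearMap.range inc).mkQ ∘ₗ Finsupp.linearCombination R b = phi ∘ₗ pr := by
      apply Finsupp.lhom_ext
      intro aa r
      simp only [LinearMap.comp_apply, Finsupp.linearCombination_single, map_smul, hB, hy, hpr_def, one_smul]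
    refine ⟨hmap, ?_⟩
    rw [← LinearMap.cancel_right hpr]
    refine LinearMap.ext (fun l => ?_)
    simp only [LinearMap.comp_apply, hhmap]
    have h1 : e.symm (pr l) = Submodule.Quotient.mk l := by
      apply e.injective
      rw [LinearEquiv.apply_symm_apply]
      rfl
    simp only [LinearEquiv.coe_coe]
    rw [h1, Submodule.liftQ_apply]
    exact LinearMap.congr_fun hcomp l


theorem noDescend_N (N : Type v) [AddCommGroup N] [Module R N]
    (PJ : PureInjective R (DirectSum ℕ (fun _ => N))) :
    ∀ H : ℕ → AddSubgroup N, (∀ n, IsMS R N (H n)) → ¬ (∀ n, H (n + 1) < H n) := by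
  classical
  intro H hMS hlt
  choose al be c0 c1 hc using hMS
  set E0 := DirectSum ℕ (fun _ => N) with hE0def
  set inc : E0 →ₗ[R] (ℕ → N) :=
    LinearMap.pi (fun i => DirectSum.component R ℕ (fun _ => N) i) with hincdef
  obtain ⟨h, hcomp⟩ := PJ E0 (ℕ → N) inc (isPureMono_coePi N) LinearMap.id
  have hhinc : ∀ x : E0, h (inc x) = x := fun x => LinearMap.congr_fun hcomp x
  have ha : ∀ n, ∃ x, x ∈ H n ∧ x ∉ H (n + 1) := by
    intro n
    obtain ⟨x, h1, h2⟩ := SetLike.exists_of_lt (hlt n)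
    exact ⟨x, h1, h2⟩
  choose a haM haN using ha
  have hmono : ∀ {n k : ℕ}, n ≤ k → H k ≤ H n :=
    fun {n k} hnk => antitone_nat_of_succ_le (fun m => (hlt m).le) hnk
  set b : ℕ → N := a with hbdef
  set q : ℕ → (ℕ → N) := fun n k => if n ≤ k then a k else 0 with hqdef
  have hq : ∀ n, q n ∈ msub R (al n) (be n) (c0 n) (c1 n) (ℕ → N) := by
    intro n
    refine msub_pi (M := fun _ : ℕ => N) (q n) (fun k => ?_)
    show (if n ≤ k then a k else 0) ∈ msub R (al n) (be n) (c0 n) (c1 n) N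
    by_cases hnk : n ≤ k
    · rw [if_pos hnk]
      have hk : a k ∈ H n := hmono hnk (haM k)
      rwa [hc n] at hk
    · rw [if_neg hnk]; exact zero_mem _
  have hsum_apply : ∀ (n k : ℕ),
      ((∑ k' ∈ Finset.range n, DirectSum.lof R ℕ (fun _ => N) k' (a k')) : E0) k
        = if k < n then a k else 0 := by
    intro n k
    rw [DFinsupp.finset_sum_apply]
    by_cases hk : k < n
    · rw [if_pos hk, Finset.sum_eq_single k]
      · simp [DirectSum.lof_eq_of, DirectSum.of_apply]
      · intro k' _ hk'
        simp [DirectSum.lof_eq_of, DirectSum.of_apply, hk']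
      · intro hnot; exact absurd (Finset.mem_range.2 hk) hnot
    · rw [if_neg hk]
      refine Finset.sum_eq_zero (fun k' hk' => ?_)
      have hne : k' ≠ k := by
        intro hEq; exact hk (hEq ▸ Finset.mem_range.1 hk')
      simp [DirectSum.lof_eq_of, DirectSum.of_apply, hne]
  have hbq : ∀ n, inc (∑ k' ∈ Finset.range n, DirectSum.lof R ℕ (fun _ => N) k' (a k')) + q n = b := by
    intro n
    funext k
    show ((∑ k' ∈ Finset.range n, DirectSum.lof R ℕ (fun _ => N) k' (a k')) : E0) k
      + (if n ≤ k then a k else 0) = a k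
    rw [hsum_apply]
    by_cases hk : k < n
    · rw [if_pos hk, if_neg (Nat.not_le.2 hk), add_zero]
    · rw [if_neg hk, if_pos (Nat.not_lt.1 hk), zero_add]
  have hdecomp : ∀ n, h b = (∑ k' ∈ Finset.range n, DirectSum.lof R ℕ (fun _ => N) k' (a k')) + h (q n) := by
    intro n
    conv_lhs => rw [← hbq n]
    rw [map_add, hhinc]
  obtain ⟨k0, hk0⟩ : ∃ k0, k0 ∉ DFinsupp.support (h b) := Infinite.exists_notMem_finset _
  have hzero : (h b) k0 = 0 := DFinsupp.notMem_support_iff.1 hk0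
  have heval : (h b) k0 = a k0 + (h (q (k0 + 1))) k0 := by
    conv_lhs => rw [hdecomp (k0 + 1)]
    rw [DFinsupp.add_apply]
    congr 1
    rw [hsum_apply, if_pos (Nat.lt_succ_self k0)]
  have hin : (h (q (k0 + 1))) k0 ∈ H (k0 + 1) := by
    have h1 : h (q (k0 + 1)) ∈ msub R (al (k0 + 1)) (be (k0 + 1)) (c0 (k0 + 1)) (c1 (k0 + 1)) E0 :=
      msub_map h (hq (k0 + 1))
    have h2 := msub_map (DirectSum.component R ℕ (fun _ => N) k0) h1
    rw [hc (k0 + 1)]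
    exact h2
  have hfin : a k0 ∈ H (k0 + 1) := by
    have hrw : a k0 = (h b) k0 - (h (q (k0 + 1))) k0 := by rw [heval]; abel
    rw [hrw, hzero, zero_sub]
    exact neg_mem hin
  exact haN k0 hfin


theorem noDescend_E {ι : Type*} [Nonempty ι] (N : Type v) [AddCommGroup N] [Module R N]
    (PJ : PureInjective R (DirectSum ℕ (fun _ => N))) :
    ∀ H : ℕ → AddSubgroup (DirectSum ι (fun _ => N)),
      (∀ n, IsMS R (DirectSum ι (fun _ => N)) (H n)) → ¬ (∀ n, H (n + 1) < H n) := by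
  classical
  intro H hMS hlt
  choose al be c0 c1 hc using hMS
  set E := DirectSum ι (fun _ => N) with hEdef
  let i0 : ι := Classical.arbitrary ι
  let H' : ℕ → AddSubgroup N := fun n => msub R (al n) (be n) (c0 n) (c1 n) N
  have hchar : ∀ (n : ℕ) (y : E), y ∈ H n ↔ ∀ i, y i ∈ H' n := by
    intro n y
    rw [hc n]
    constructor
    · intro hy i
      exact msub_map (DirectSum.component R ι (fun _ => N) i) hy
    · intro hy
      exact msub_directSum_of_components y hy
  have hle' : ∀ n, H' (n + 1) ≤ H' n := by
    intro n y hy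
    have h1 : DirectSum.lof R ι (fun _ => N) i0 y ∈ H (n + 1) := by
      rw [hchar (n + 1)]
      intro i
      by_cases hEq : i0 = i
      · subst hEq
        have : (DirectSum.lof R ι (fun _ => N) i0 y) i0 = y := by simp
        rw [this]; exact hy
      · have : (DirectSum.lof R ι (fun _ => N) i0 y) i = 0 := by
          simp [DirectSum.lof_eq_of, DirectSum.of_apply, hEq]
        rw [this]; exact zero_mem _
    have h2 := (hlt n).le h1
    rw [hchar n] at h2
    have h3 := h2 i0
    have h4 : (DirectSum.lof R ι (fun _ => N) i0 y) i0 = y := by simp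
    rwa [h4] at h3
  have hne' : ∀ n, H' (n + 1) ≠ H' n := by
    intro n hEqH
    have hle2 : H n ≤ H (n + 1) := by
      intro y hy
      rw [hchar (n + 1)]
      rw [hchar n] at hy
      intro i
      rw [hEqH]
      exact hy i
    exact absurd (le_antisymm (hlt n).le hle2) (hlt n).ne
  exact noDescend_N N PJ H' (fun n => ⟨al n, be n, c0 n, c1 n, rfl⟩)
    (fun n => lt_of_le_of_ne (hle' n) (hne' n))


theorem exists_minimal_ms {E : Type*} [AddCommGroup E] [Module R E]
    (hdcc : ∀ H : ℕ → AddSubgroup E, (∀ n, IsMS R E (H n)) → ¬ (∀ n, H (n + 1) < H n))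
    (S : Set (AddSubgroup E)) (hS : ∀ H ∈ S, IsMS R E H) (hne : S.Nonempty) :
    ∃ H ∈ S, ∀ H' ∈ S, ¬ H' < H := by
  by_contra hcon
  push_neg at hcon
  obtain ⟨H0, hH0⟩ := hne
  choose F hF1 hF2 using hcon
  let seq : ℕ → {H // H ∈ S} := fun n =>
    Nat.rec ⟨H0, hH0⟩ (fun _ p => ⟨F p.1 p.2, hF1 p.1 p.2⟩) n
  have hseq : ∀ n, (seq (n + 1)).1 < (seq n).1 := fun n => hF2 _ _
  exact hdcc (fun n => (seq n).1) (fun n => hS _ (seq n).2) hseq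

theorem exists_mem_of_coset_family {E : Type*} [AddCommGroup E] [Module R E]
    (hdcc : ∀ H : ℕ → AddSubgroup E, (∀ n, IsMS R E (H n)) → ¬ (∀ n, H (n + 1) < H n))
    (Fam : Set (Set E))
    (hcos : ∀ D ∈ Fam, ∃ (e : E) (H : AddSubgroup E), IsMS R E H ∧ D = {x | x - e ∈ H})
    (hdir : ∀ D ∈ Fam, ∀ D' ∈ Fam, ∃ D'' ∈ Fam, D'' ⊆ D ∩ D') :
    ∃ x, ∀ D ∈ Fam, x ∈ D := by
  classical
  rcases Set.eq_empty_or_nonempty Fam with hFam | hFam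
  · subst hFam
    exact ⟨0, fun D hD => absurd hD (Set.notMem_empty D)⟩
  · let S : Set (AddSubgroup E) := {Hs | IsMS R E Hs ∧ ∃ e, {x | x - e ∈ Hs} ∈ Fam}
    have hSms : ∀ Hs ∈ S, IsMS R E Hs := fun _ h => h.1
    have hSne : S.Nonempty := by
      obtain ⟨D, hD⟩ := hFam
      obtain ⟨e, Hs, hms, hDeq⟩ := hcos D hD
      exact ⟨Hs, hms, e, hDeq ▸ hD⟩
    obtain ⟨H0, hH0S, hH0min⟩ := exists_minimal_ms hdcc S hSms hSne
    obtain ⟨hH0ms, e0, hC0⟩ := hH0S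
    refine ⟨e0, fun D hD => ?_⟩
    obtain ⟨D2, hD2, hD2sub⟩ := hdir _ hC0 D hD
    obtain ⟨e2, H2, hH2ms, hD2eq⟩ := hcos D2 hD2
    have he2D2 : e2 ∈ D2 := by
      rw [hD2eq]
      show e2 - e2 ∈ H2
      rw [sub_self]
      exact zero_mem _
    have he2C0 : e2 - e0 ∈ H0 := (hD2sub he2D2).1
    have hH2le : H2 ≤ H0 := by
      intro hh hmem
      have h1 : e2 + hh ∈ D2 := by
        rw [hD2eq]
        show e2 + hh - e2 ∈ H2
        rwa [show e2 + hh - e2 = hh from by abel]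
      have h2 : e2 + hh - e0 ∈ H0 := (hD2sub h1).1
      have h3 := sub_mem h2 he2C0
      rwa [show e2 + hh - e0 - (e2 - e0) = hh from by abel] at h3
    have hH2S : H2 ∈ S := ⟨hH2ms, e2, hD2eq ▸ hD2⟩
    have hH2eq : H2 = H0 := by
      by_contra hne
      exact hH0min H2 hH2S (lt_of_le_of_ne hH2le hne)
    have he0D2 : e0 ∈ D2 := by
      rw [hD2eq]
      show e0 - e2 ∈ H2
      rw [hH2eq]
      rw [show e0 - e2 = -(e2 - e0) from by abel]
      exact neg_mem he2C0
    exact (hD2sub he0D2).2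


theorem pureInjective_of_split (E : Type v) [AddCommGroup E] [Module R E]
    (hs : ∀ (P : Type v) [AddCommGroup P] [Module R P] (j : E →ₗ[R] P),
      IsPureMono R j → ∃ r : P →ₗ[R] E, r ∘ₗ j = LinearMap.id) :
    PureInjective R E := by
  intro A B _ _ _ _ i hi f
  set W : Submodule R (E × B) := LinearMap.range (f.prod (-i)) with hW
  set j : E →ₗ[R] (E × B) ⧸ W := W.mkQ ∘ₗ LinearMap.inl R E B with hj
  set k : B →ₗ[R] (E × B) ⧸ W := W.mkQ ∘ₗ LinearMap.inr R E B with hk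
  have hki : ∀ a : A, k (i a) = j (f a) := by
    intro a
    rw [hk, hj]
    simp only [LinearMap.comp_apply, LinearMap.inr_apply, LinearMap.inl_apply]
    rw [← sub_eq_zero, ← map_sub]
    have hsub : ((0 : E), i a) - (f a, (0 : B)) = -(f a, -(i a)) := by
      ext <;> simp
    rw [hsub, map_neg, neg_eq_zero, Submodule.mkQ_apply, Submodule.Quotient.mk_eq_zero]
    exact ⟨a, rfl⟩
  have hjinj : Function.Injective j := by
    have hzero : ∀ e : E, j e = 0 → e = 0 := by
      intro e he
      rw [hj] at he
      simp only [LinearMap.comp_apply, LinearMap.inl_apply] at he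
      rw [Submodule.mkQ_apply, Submodule.Quotient.mk_eq_zero] at he
      obtain ⟨a, ha⟩ := he
      have h2 := congrArg Prod.snd ha
      simp only [LinearMap.prod_apply, Pi.prod, LinearMap.neg_apply] at h2
      have hia : i a = 0 := by simpa [neg_eq_zero] using h2
      have ha0 : a = 0 := hi.1 (by rw [hia, map_zero])
      have h1 := congrArg Prod.fst ha
      simp only [LinearMap.prod_apply, Pi.prod] at h1
      rw [← h1, ha0]; simp [Function.prod]
    intro e1 e2 he
    have := hzero (e1 - e2) (by rw [map_sub, he, sub_self])
    exact sub_eq_zero.1 this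
  set q2 := (LinearMap.range j).mkQ with hq2
  set phiq : B →ₗ[R] ((E × B) ⧸ W) ⧸ (LinearMap.range j) := q2 ∘ₗ k with hphiq
  have hsurj : Function.Surjective phiq := by
    intro z
    obtain ⟨p, rfl⟩ := Submodule.mkQ_surjective _ z
    obtain ⟨w, rfl⟩ := Submodule.mkQ_surjective W p
    obtain ⟨e, b⟩ := w
    refine ⟨b, ?_⟩
    rw [hphiq, LinearMap.comp_apply, ← sub_eq_zero, ← map_sub]
    have hdiff : k b - W.mkQ (e, b) = j (-e) := by
      rw [hk, hj]
      simp only [LinearMap.comp_apply, LinearMap.inr_apply, LinearMap.inl_apply]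
      rw [← map_sub]
      congr 1
      ext <;> simp
    rw [hdiff, hq2, Submodule.mkQ_apply, Submodule.Quotient.mk_eq_zero]
    exact ⟨-e, rfl⟩
  have hker : LinearMap.ker phiq = LinearMap.range i := by
    ext b1
    constructor
    · intro hb
      rw [LinearMap.mem_ker, hphiq, LinearMap.comp_apply, hq2, Submodule.mkQ_apply,
        Submodule.Quotient.mk_eq_zero] at hb
      obtain ⟨e, he⟩ := hb
      have hWmem : ((e, 0) : E × B) - (0, b1) ∈ W := by
        rw [← Submodule.Quotient.eq]
        exact he
      obtain ⟨a, ha⟩ := hWmem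
      have h2 := congrArg Prod.snd ha
      simp only [LinearMap.prod_apply, Pi.prod, LinearMap.neg_apply, Prod.snd_sub] at h2
      refine ⟨a, ?_⟩
      have : -(i a) = 0 - b1 := h2
      rw [zero_sub] at this
      exact neg_injective this
    · intro hb
      obtain ⟨a, rfl⟩ := hb
      rw [LinearMap.mem_ker, hphiq, LinearMap.comp_apply, hki a, hq2, Submodule.mkQ_apply,
        Submodule.Quotient.mk_eq_zero]
      exact ⟨f a, rfl⟩
  have hjpure : IsPureMono R j := by
    refine ⟨hjinj, Submodule.mkQ_surjective _, ?_⟩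
    intro F _ _ hFP phi
    set tau := LinearMap.quotKerEquivOfSurjective phiq hsurj with htau
    set qe := Submodule.quotEquivOfEq _ _ hker with hqe
    set psi' : F →ₗ[R] B ⧸ LinearMap.range i :=
      qe.toLinearMap ∘ₗ tau.symm.toLinearMap ∘ₗ phi with hpsi'
    obtain ⟨g, hg⟩ := hi.2.2 F hFP psi'
    refine ⟨k ∘ₗ g, ?_⟩
    refine LinearMap.ext (fun x => ?_)
    have h1 : q2 (k (g x)) = tau (Submodule.Quotient.mk (g x)) := rfl
    have h2 : qe (Submodule.Quotient.mk (g x)) = Submodule.Quotient.mk (g x) :=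
      Submodule.quotEquivOfEq_mk _ _ hker _
    have h3 : (Submodule.Quotient.mk (g x) : B ⧸ LinearMap.range i) = psi' x := by
      have := LinearMap.congr_fun hg x
      simpa [Submodule.mkQ_apply] using this
    have hmkker : (Submodule.Quotient.mk (g x) : B ⧸ LinearMap.ker phiq) = tau.symm (phi x) := by
      apply qe.injective
      rw [h2, h3, hpsi']
      simp only [LinearMap.comp_apply, LinearEquiv.coe_coe]
    show q2 (k (g x)) = phi x
    rw [h1, hmkker, LinearEquiv.apply_symm_apply]
  obtain ⟨r, hr⟩ := hs ((E × B) ⧸ W) j hjpure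
  refine ⟨r ∘ₗ k, ?_⟩
  refine LinearMap.ext (fun a => ?_)
  show r (k (i a)) = f a
  rw [hki a]
  have := LinearMap.congr_fun hr (f a)
  simpa using this

theorem exists_extension {E P : Type v} [AddCommGroup E] [Module R E] [AddCommGroup P] [Module R P]
    (j : E →ₗ[R] P) (hjinj : Function.Injective j)
    (hdcc : ∀ H : ℕ → AddSubgroup E, (∀ n, IsMS R E (H n)) → ¬ (∀ n, H (n + 1) < H n))
    (hbase : ∀ (m n : ℕ) (c : Fin m → Fin n → R) (bb : Fin n → P) (ee : Fin m → E),
      (∀ t, ∑ jj, c t jj • bb jj = j (ee t)) →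
      ∃ e' : Fin n → E, ∀ t, ∑ jj, c t jj • e' jj = ee t) :
    ∃ r : P →ₗ[R] E, r ∘ₗ j = LinearMap.id := by
  classical
  let Star : (P →ₗ.[R] E) → Prop := fun g =>
    ∀ (m n : ℕ) (c : Fin m → Fin n → R) (bb : Fin n → P) (aa : Fin m → g.domain),
      (∀ t, ∑ jj, c t jj • bb jj = (aa t : P)) →
      ∃ e' : Fin n → E, ∀ t, ∑ jj, c t jj • e' jj = g (aa t)
  set f0 : P →ₗ.[R] E :=
    ⟨LinearMap.range j, ((LinearEquiv.ofInjective j hjinj).symm : _ →ₗ[R] E)⟩ with hf0def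
  have hjmem : ∀ e : E, j e ∈ LinearMap.range j := fun e => ⟨e, rfl⟩
  have hf0 : ∀ (e : E) (hmem : j e ∈ LinearMap.range j), f0 ⟨j e, hmem⟩ = e := by
    intro e hmem
    have heq : (⟨j e, hmem⟩ : LinearMap.range j) = LinearEquiv.ofInjective j hjinj e := by
      apply Subtype.ext
      simp [LinearEquiv.ofInjective_apply]
    have h1 : f0 ⟨j e, hmem⟩
        = (LinearEquiv.ofInjective j hjinj).symm ⟨j e, hmem⟩ := rfl
    rw [h1, heq]
    simp
  have hf0base : Star f0 := by
    intro m n c bb aa hrel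
    have haa : ∀ t, j (f0 (aa t)) = (aa t : P) := by
      intro t
      obtain ⟨e, he⟩ := (aa t).2
      have heq : (aa t) = ⟨j e, hjmem e⟩ := Subtype.ext he.symm
      rw [heq, hf0 e (hjmem e)]
    obtain ⟨e', he'⟩ := hbase m n c bb (fun t => f0 (aa t))
      (fun t => by rw [haa t]; exact hrel t)
    exact ⟨e', he'⟩
  let S : Set (P →ₗ.[R] E) := {g | f0 ≤ g ∧ Star g}
  have hf0S : f0 ∈ S := ⟨le_refl f0, hf0base⟩
  have hchain : ∀ c ⊆ S, IsChain (· ≤ ·) c → ∀ y ∈ c, ∃ ub ∈ S, ∀ z ∈ c, z ≤ ub := by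
    intro cset hsub hch y hy
    have hdir : DirectedOn (· ≤ ·) cset := hch.directedOn
    refine ⟨LinearPMap.sSup cset hdir, ⟨?_, ?_⟩, fun z hz => LinearPMap.le_sSup hdir hz⟩
    · exact le_trans (hsub hy).1 (LinearPMap.le_sSup hdir hy)
    · intro m n c bb aa hrel
      have hmemdom : ∀ t, ∃ g ∈ cset, ((aa t : P)) ∈ g.domain := by
        intro t
        have h1 : ((aa t : P)) ∈ sSup (LinearPMap.domain '' cset) := (aa t).2
        have hdirim : DirectedOn (· ≤ ·) (LinearPMap.domain '' cset) :=
          directedOn_image.2 (hdir.mono (fun _ _ h => h.1))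
        obtain ⟨dom, ⟨g, hg, rfl⟩, hmem⟩ :=
          (Submodule.mem_sSup_of_directed (Set.Nonempty.image _ ⟨y, hy⟩) hdirim).1 h1
        exact ⟨g, hg, hmem⟩
      choose gg hgg hggmem using hmemdom
      have hfin : ∀ s : Finset (Fin m), ∃ g ∈ cset, ∀ t ∈ s, ((aa t : P)) ∈ g.domain := by
        intro s
        induction s using Finset.induction_on with
        | empty => exact ⟨y, hy, by simp⟩
        | @insert t s hts ih =>
          obtain ⟨g1, hg1, hdom1⟩ := ih
          by_cases hgeq : g1 = gg t
          · refine ⟨g1, hg1, fun t' ht' => ?_⟩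
            rcases Finset.mem_insert.1 ht' with rfl | ht'
            · rw [hgeq]; exact hggmem t'
            · exact hdom1 t' ht'
          · rcases hch.total hg1 (hgg t) with hle | hle
            · refine ⟨gg t, hgg t, fun t' ht' => ?_⟩
              rcases Finset.mem_insert.1 ht' with rfl | ht'
              · exact hggmem t'
              · exact hle.1 (hdom1 t' ht')
            · refine ⟨g1, hg1, fun t' ht' => ?_⟩
              rcases Finset.mem_insert.1 ht' with rfl | ht'
              · exact hle.1 (hggmem t')
              · exact hdom1 t' ht'
      obtain ⟨g, hgc, hgdomAll⟩ := hfin Finset.univ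
      have hgdom : ∀ t, ((aa t : P)) ∈ g.domain := fun t => hgdomAll t (Finset.mem_univ t)
      obtain ⟨e', he'⟩ := (hsub hgc).2 m n c bb (fun t => ⟨(aa t : P), hgdom t⟩) hrel
      refine ⟨e', fun t => ?_⟩
      rw [he' t]
      exact (LinearPMap.le_sSup hdir hgc).2 rfl
  obtain ⟨gmax, hf0le, hmax⟩ := zorn_le_nonempty₀ S hchain f0 hf0S
  have hStar : Star gmax := hmax.1.2
  have hdomtop : gmax.domain = ⊤ := by
    by_contra hne
    obtain ⟨b, hb⟩ : ∃ b : P, b ∉ gmax.domain := by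
      by_contra hall
      push_neg at hall
      exact hne (Submodule.eq_top_iff'.2 hall)
    let Fam : Set (Set E) := {D | ∃ (m n : ℕ) (c0 : Fin m → R) (c1 : Fin m → Fin n → R)
      (bb : Fin n → P) (aa : Fin m → gmax.domain),
      (∀ t, c0 t • b + ∑ jj, c1 t jj • bb jj = (aa t : P)) ∧
      D = {x : E | ∃ e' : Fin n → E, ∀ t, c0 t • x + ∑ jj, c1 t jj • e' jj = gmax (aa t)}}
    have hcos : ∀ D ∈ Fam, ∃ (e : E) (H : AddSubgroup E), IsMS R E H ∧ D = {x | x - e ∈ H} := by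
      rintro D ⟨m, n, c0, c1, bb, aa, hrel, rfl⟩
      obtain ⟨edd, hedd⟩ := hStar m (n + 1) (fun t => Fin.cons (c0 t) (c1 t)) (Fin.cons b bb) aa
        (fun t => by
          rw [Fin.sum_univ_succ]
          simp only [Fin.cons_zero, Fin.cons_succ]
          exact hrel t)
      have hed2 : ∀ t, c0 t • edd 0 + ∑ jj, c1 t jj • edd jj.succ = gmax (aa t) := by
        intro t
        have h2 := hedd t
        rw [Fin.sum_univ_succ] at h2
        simpa only [Fin.cons_zero, Fin.cons_succ] using h2
      refine ⟨edd 0, msub R m n c0 c1 E, ⟨m, n, c0, c1, rfl⟩, ?_⟩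
      ext x
      constructor
      · rintro ⟨ex, hex⟩
        refine ⟨fun jj => ex jj - edd jj.succ, fun t => ?_⟩
        have hcalc : c0 t • (x - edd 0) + ∑ jj, c1 t jj • (ex jj - edd jj.succ)
            = (c0 t • x + ∑ jj, c1 t jj • ex jj)
              - (c0 t • edd 0 + ∑ jj, c1 t jj • edd jj.succ) := by
          simp only [smul_sub, Finset.sum_sub_distrib]
          abel
        rw [hcalc, hex t, hed2 t, sub_self]
      · rintro ⟨v, hv⟩
        refine ⟨fun jj => v jj + edd jj.succ, fun t => ?_⟩
        have hcalc : c0 t • x + ∑ jj, c1 t jj • (v jj + edd jj.succ)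
            = (c0 t • (x - edd 0) + ∑ jj, c1 t jj • v jj)
              + (c0 t • edd 0 + ∑ jj, c1 t jj • edd jj.succ) := by
          simp only [smul_add, smul_sub, Finset.sum_add_distrib]
          abel
        rw [hcalc, hv t, hed2 t, zero_add]
    have hdirected : ∀ D ∈ Fam, ∀ D' ∈ Fam, ∃ D'' ∈ Fam, D'' ⊆ D ∩ D' := by
      rintro D ⟨m, n, c0, c1, bb, aa, hrel, rfl⟩ D' ⟨m', n', c0', c1', bb', aa', hrel', rfl⟩
      let C0 : Fin (m + m') → R := Fin.addCases c0 c0'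
      let C1 : Fin (m + m') → Fin (n + n') → R :=
        Fin.addCases (fun t => Fin.addCases (c1 t) 0) (fun t => Fin.addCases 0 (c1' t))
      let BB : Fin (n + n') → P := Fin.addCases bb bb'
      let AA : Fin (m + m') → gmax.domain := Fin.addCases aa aa'
      refine ⟨{x : E | ∃ e' : Fin (n + n') → E,
          ∀ t, C0 t • x + ∑ jj, C1 t jj • e' jj = gmax (AA t)},
        ⟨m + m', n + n', C0, C1, BB, AA, ?_, rfl⟩, ?_⟩
      · intro t
        induction t using Fin.addCases with
        | left t1 =>
          simp only [C0, C1, BB, AA, Fin.addCases_left]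
          rw [Fin.sum_univ_add]
          simp only [Fin.addCases_left, Fin.addCases_right, Pi.zero_apply, zero_smul,
            Finset.sum_const_zero, add_zero]
          exact hrel t1
        | right t2 =>
          simp only [C0, C1, BB, AA, Fin.addCases_right]
          rw [Fin.sum_univ_add]
          simp only [Fin.addCases_left, Fin.addCases_right, Pi.zero_apply, zero_smul,
            Finset.sum_const_zero, zero_add]
          exact hrel' t2
      · rintro x ⟨ex, hex⟩
        constructor
        · refine ⟨fun jj => ex (Fin.castAdd n' jj), fun t => ?_⟩
          have h1 := hex (Fin.castAdd m' t)
          rw [Fin.sum_univ_add] at h1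
          simpa only [C0, C1, AA, Fin.addCases_left, Fin.addCases_right, Pi.zero_apply,
            zero_smul, Finset.sum_const_zero, add_zero] using h1
        · refine ⟨fun jj => ex (Fin.natAdd n jj), fun t => ?_⟩
          have h1 := hex (Fin.natAdd m t)
          rw [Fin.sum_univ_add] at h1
          simpa only [C0, C1, AA, Fin.addCases_left, Fin.addCases_right, Pi.zero_apply,
            zero_smul, Finset.sum_const_zero, zero_add] using h1
    obtain ⟨e, he⟩ := exists_mem_of_coset_family hdcc Fam hcos hdirected
    have hP1 : ∀ rr : R, rr • b = 0 → rr • e = 0 := by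
      intro rr hrb
      have hrel1 : ∀ t : Fin 1, rr • b + ∑ jj : Fin 0, (Fin.elim0 jj : R) • (Fin.elim0 jj : P)
          = (((0 : gmax.domain)) : P) := by
        intro t
        simp [hrb]
      have hmem : e ∈ {x : E | ∃ e' : Fin 0 → E,
          ∀ t : Fin 1, rr • x + ∑ jj, (Fin.elim0 jj : R) • e' jj = gmax 0} :=
        he _ ⟨1, 0, (fun _ => rr), (fun _ => Fin.elim0), Fin.elim0, (fun _ => 0), hrel1, rfl⟩
      obtain ⟨e', he'⟩ := hmem
      have h1 := he' 0
      simpa using h1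
    have hP2 : ∀ (x : gmax.domain) (rr : R), ((x : P)) = rr • b → gmax x = rr • e := by
      intro x rr hx
      have hrel1 : ∀ t : Fin 1, rr • b + ∑ jj : Fin 0, (Fin.elim0 jj : R) • (Fin.elim0 jj : P)
          = ((x : gmax.domain) : P) := by
        intro t
        simpa using hx.symm
      have hmem : e ∈ {z : E | ∃ e' : Fin 0 → E,
          ∀ t : Fin 1, rr • z + ∑ jj, (Fin.elim0 jj : R) • e' jj = gmax x} :=
        he _ ⟨1, 0, (fun _ => rr), (fun _ => Fin.elim0), Fin.elim0, (fun _ => x), hrel1, rfl⟩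
      obtain ⟨e', he'⟩ := hmem
      have h1 := he' 0
      rw [Fin.sum_univ_zero, add_zero] at h1
      exact h1.symm
    set g1 := LinearPMap.mkSpanSingleton' (σ := RingHom.id R) b e hP1 with hg1def
    have hbspan : b ∈ g1.domain := Submodule.mem_span_singleton_self b
    have hcompat : ∀ (x : gmax.domain) (y : g1.domain), (x : P) = y → gmax x = g1 y := by
      intro x y hxy
      have hy : (y : P) ∈ Submodule.span R {b} := y.2
      obtain ⟨rr, hrr⟩ := Submodule.mem_span_singleton.1 hy
      have hmem2 : rr • b ∈ g1.domain :=
        Submodule.smul_mem _ _ (Submodule.mem_span_singleton_self b)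
      have hyy : y = ⟨rr • b, hmem2⟩ := Subtype.ext hrr.symm
      rw [hyy]
      exact (hP2 x rr (by rw [hxy, ← hrr])).trans
        (LinearPMap.mkSpanSingleton'_apply b e hP1 rr hmem2).symm
    set g2 := gmax.sup g1 hcompat with hg2def
    have hg2S : g2 ∈ S := by
      constructor
      · exact le_trans hmax.1.1 (gmax.left_le_sup g1 hcompat)
      · intro m n c bb aa hrel
        have hdec : ∀ t, ∃ (yv : P) (rv : R), yv ∈ gmax.domain ∧ yv + rv • b = (aa t : P) := by
          intro t
          have h1 : ((aa t : P)) ∈ gmax.domain ⊔ g1.domain := (aa t).2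
          obtain ⟨y1, hy1, z1, hz1, hyz⟩ := Submodule.mem_sup.1 h1
          have hz1' : z1 ∈ Submodule.span R {b} := hz1
          obtain ⟨rr, hrr⟩ := Submodule.mem_span_singleton.1 hz1'
          exact ⟨y1, rr, hy1, by rw [hrr]; exact hyz⟩
        choose yy rr hyy hsum using hdec
        have hrelD : ∀ t, -(rr t) • b + ∑ jj, c t jj • bb jj
            = ((⟨yy t, hyy t⟩ : gmax.domain) : P) := by
          intro t
          have hco : ((⟨yy t, hyy t⟩ : gmax.domain) : P) = yy t := rfl
          rw [hco, hrel t, ← hsum t, neg_smul]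
          abel
        have hmem : e ∈ {x : E | ∃ e' : Fin n → E,
            ∀ t, -(rr t) • x + ∑ jj, c t jj • e' jj = gmax ⟨yy t, hyy t⟩} :=
          he _ ⟨m, n, (fun t => -(rr t)), c, bb, (fun t => ⟨yy t, hyy t⟩), hrelD, rfl⟩
        obtain ⟨e', he'⟩ := hmem
        refine ⟨e', fun t => ?_⟩
        have hmem2 : rr t • b ∈ g1.domain :=
          Submodule.smul_mem _ _ (Submodule.mem_span_singleton_self b)
        have happ : g2 (aa t) = gmax ⟨yy t, hyy t⟩ + g1 ⟨rr t • b, hmem2⟩ :=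
          LinearPMap.sup_apply hcompat ⟨yy t, hyy t⟩ ⟨rr t • b, hmem2⟩ (aa t) (hsum t)
        have hg1app : g1 ⟨rr t • b, hmem2⟩ = rr t • e :=
          LinearPMap.mkSpanSingleton'_apply b e hP1 (rr t) hmem2
        rw [happ, hg1app]
        have h2 := he' t
        rw [show gmax ⟨yy t, hyy t⟩ + rr t • e
            = (-(rr t) • e + ∑ jj, c t jj • e' jj) + rr t • e from by rw [h2]]
        rw [neg_smul]
        abel
    have hle2 : gmax ≤ g2 := gmax.left_le_sup g1 hcompat
    have hge2 : g2 ≤ gmax := hmax.2 hg2S hle2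
    have hbdom : b ∈ g2.domain := Submodule.mem_sup_right hbspan
    exact hb (hge2.1 hbdom)
  set r : P →ₗ[R] E := gmax.toFun ∘ₗ
    LinearMap.codRestrict gmax.domain LinearMap.id (fun x => by rw [hdomtop]; trivial) with hrdef
  refine ⟨r, LinearMap.ext (fun e1 => ?_)⟩
  have hmemdom : j e1 ∈ gmax.domain := hf0le.1 (hjmem e1)
  have h1 : f0 (⟨j e1, hjmem e1⟩ : LinearMap.range j) = gmax ⟨j e1, hmemdom⟩ :=
    hf0le.2 rfl
  rw [hf0 e1 (hjmem e1)] at h1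
  show gmax.toFun _ = e1
  exact h1.symm

theorem backward (N : Type v) [AddCommGroup N] [Module R N]
    (PJ : PureInjective R (DirectSum ℕ (fun _ => N))) (ι : Type v) :
    PureInjective R (DirectSum ι (fun _ => N)) := by
  classical
  by_cases hι : Nonempty ι
  · haveI := hι
    apply pureInjective_of_split
    intro P _ _ jmap hj
    have hdcc := noDescend_E (ι := ι) N PJ
    apply exists_extension jmap hj.1 hdcc
    intro m n c bb ee hrel
    set S : Finset ι := Finset.univ.biUnion (fun t : Fin m => DFinsupp.support (ee t)) with hS
    obtain ⟨sig2, pi2, hps2, -⟩ := directSumRetract (R := R)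
      (fun t : {i // i ∈ S} => ((Fintype.equivFin {i // i ∈ S}) t : ℕ))
      (fun a b hab => (Fintype.equivFin {i // i ∈ S}).injective (Fin.val_injective hab)) N
    have hTpi : PureInjective R (DirectSum {i // i ∈ S} (fun _ => N)) :=
      pureInjective_of_retract sig2 pi2 hps2 PJ
    obtain ⟨sig1, pi1, hps1, hrange1⟩ := directSumRetract (R := R)
      (Subtype.val : {i // i ∈ S} → ι) Subtype.val_injective N
    obtain ⟨hmap, hmapj⟩ := hTpi (DirectSum ι (fun _ => N)) P jmap hj pi1
    refine ⟨fun jj => sig1 (hmap (bb jj)), fun t => ?_⟩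
    have hlin : ∑ jj, c t jj • sig1 (hmap (bb jj)) = sig1 (hmap (∑ jj, c t jj • bb jj)) := by
      simp [map_sum, map_smul]
    rw [hlin, hrel t]
    have h1 : hmap (jmap (ee t)) = pi1 (ee t) := LinearMap.congr_fun hmapj (ee t)
    rw [h1]
    obtain ⟨x, hx⟩ := hrange1 (ee t) (fun i hi =>
      ⟨⟨i, Finset.mem_biUnion.2 ⟨t, Finset.mem_univ t, DFinsupp.mem_support_iff.2 hi⟩⟩, rfl⟩)
    rw [← hx, show pi1 (sig1 x) = x from LinearMap.congr_fun hps1 x]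
  · have hsub : Subsingleton (DirectSum ι (fun _ => N)) :=
      ⟨fun a b => DFinsupp.ext (fun i => absurd ⟨i⟩ hι)⟩
    intro A B _ _ _ _ i hi f
    refine ⟨0, LinearMap.ext (fun a => ?_)⟩
    exact Subsingleton.elim _ _

end SigmaPI

/-- A module `N` is `Σ`-pure-injective (every direct sum of copies of `N` is
pure-injective) iff the countable direct sum `N^(ℵ₀)` is pure-injective. -/
theorem sigmaPureInjective_iff_countable (N : Type v) [AddCommGroup N] [Module R N] :
    (∀ ι : Type v, PureInjective R (DirectSum ι (fun _ => N))) ↔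
      PureInjective R (DirectSum ℕ (fun _ => N)) := by
  constructor
  · intro h
    obtain ⟨sig, pi, hps, -⟩ := SigmaPI.directSumRetract (R := R)
      (ULift.up : ℕ → ULift.{v} ℕ) (fun a b hab => congrArg ULift.down hab) N
    exact SigmaPI.pureInjective_of_retract sig pi hps (h (ULift.{v} ℕ))
  · intro PJ ι
    exact SigmaPI.backward N PJ ι
end
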